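/- For a static attack tree with proper tree structure, the minimal successful attacks of AND(v₁,v₂) are exactly the sets A₁ ∪ A₂ where A₁ is a minimal successful attack of v₁ and A₂ is a minimal successful attack of v₂. -/
import Mathlib


/-- Static attack trees over a set `β` of basic attack steps. -/
inductive SAT (β : Type) : Type where
  | bas : β → SAT β
  | or : SAT β → SAT β → SAT β
  | and : SAT β → SAT β → SAT β

/-- Structure function: does attack `A` succeed at the (root of the) tree? -/
def SAT.sf {β : Type} : SAT β → Set β → Prop
  | .bas a, A => a ∈ A
  | .or t₁ t₂, A => t₁.sf A ∨ t₂.sf A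
  | .and t₁ t₂, A => t₁.sf A ∧ t₂.sf A

/-- `A` is a minimal successful attack at `t`. -/
def SAT.minimalAttack {β : Type} (t : SAT β) (A : Set β) : Prop :=
  t.sf A ∧ ∀ B ⊂ A, ¬ t.sf B

/-- Semantics: the set of minimal successful attacks. -/
def SAT.sem {β : Type} (t : SAT β) : Set (Set β) := {A | t.minimalAttack A}

/-- BAS leaves occurring in the tree. -/
def SAT.leaves {β : Type} : SAT β → Set β
  | .bas a => {a}
  | .or t₁ t₂ => t₁.leaves ∪ t₂.leaves
  | .and t₁ t₂ => t₁.leaves ∪ t₂.leaves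

/-- Proper tree structure: the BAS sets of the two children of any gate are disjoint. -/
def SAT.isTree {β : Type} : SAT β → Prop
  | .bas _ => True
  | .or t₁ t₂ => t₁.isTree ∧ t₂.isTree ∧ Disjoint t₁.leaves t₂.leaves
  | .and t₁ t₂ => t₁.isTree ∧ t₂.isTree ∧ Disjoint t₁.leaves t₂.leaves


lemma SAT.sf_congr {β : Type} (t : SAT β) :
    ∀ A B : Set β, A ∩ t.leaves = B ∩ t.leaves → (t.sf A ↔ t.sf B) := by
  induction t with
  | bas a =>
    intro A B h
    have : a ∈ A ∩ ({a} : Set β) ↔ a ∈ B ∩ ({a} : Set β) := by rw [show A ∩ {a} = B ∩ {a} from h]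
    simpa [SAT.sf, SAT.leaves] using this
  | or t₁ t₂ ih₁ ih₂ =>
    intro A B h
    have h1 : A ∩ t₁.leaves = B ∩ t₁.leaves := by
      have := congrArg (· ∩ t₁.leaves) h
      simpa [Set.inter_assoc, SAT.leaves, Set.union_inter_cancel_left] using this
    have h2 : A ∩ t₂.leaves = B ∩ t₂.leaves := by
      have := congrArg (· ∩ t₂.leaves) h
      simpa [Set.inter_assoc, SAT.leaves, Set.union_inter_cancel_right] using this
    simp [SAT.sf, ih₁ A B h1, ih₂ A B h2]
  | and t₁ t₂ ih₁ ih₂ =>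
    intro A B h
    have h1 : A ∩ t₁.leaves = B ∩ t₁.leaves := by
      have := congrArg (· ∩ t₁.leaves) h
      simpa [Set.inter_assoc, SAT.leaves, Set.union_inter_cancel_left] using this
    have h2 : A ∩ t₂.leaves = B ∩ t₂.leaves := by
      have := congrArg (· ∩ t₂.leaves) h
      simpa [Set.inter_assoc, SAT.leaves, Set.union_inter_cancel_right] using this
    simp [SAT.sf, ih₁ A B h1, ih₂ A B h2]

lemma SAT.sf_inter {β : Type} (t : SAT β) (A : Set β) :
    t.sf (A ∩ t.leaves) ↔ t.sf A :=
  t.sf_congr _ _ (by rw [Set.inter_assoc, Set.inter_self])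

lemma SAT.min_subset_leaves {β : Type} {t : SAT β} {A : Set β}
    (h : t.minimalAttack A) : A ⊆ t.leaves := by
  by_contra hsub
  have hlt : A ∩ t.leaves ⊂ A := by
    constructor
    · exact Set.inter_subset_left
    · intro hle
      exact hsub fun x hx => ((hle hx).2)
  exact h.2 _ hlt ((t.sf_inter A).2 h.1)

/-- for tree-structured static ATs, the minimal attacks of
`AND(v₁,v₂)` are exactly the unions `A₁ ∪ A₂` of minimal attacks of the children. -/
theorem stmt2 {β : Type} (v₁ v₂ : SAT β) (ht : (SAT.and v₁ v₂).isTree) :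
    (SAT.and v₁ v₂).sem =
      {A | ∃ A₁ ∈ v₁.sem, ∃ A₂ ∈ v₂.sem, A = A₁ ∪ A₂} := by
  obtain ⟨ht₁, ht₂, hd⟩ := ht
  ext A
  simp only [SAT.sem, Set.mem_setOf_eq]
  constructor
  · rintro ⟨⟨hs₁, hs₂⟩, hmin⟩
    have hAsub : A ⊆ v₁.leaves ∪ v₂.leaves :=
      SAT.min_subset_leaves (t := v₁.and v₂) ⟨show v₁.sf A ∧ v₂.sf A from ⟨hs₁, hs₂⟩, hmin⟩
    set A₁ := A ∩ v₁.leaves with hA₁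
    set A₂ := A ∩ v₂.leaves with hA₂
    have hAeq : A = A₁ ∪ A₂ := by
      rw [hA₁, hA₂, ← Set.inter_union_distrib_left]
      exact (Set.inter_eq_left.2 hAsub).symm
    have hd12 : Disjoint A₁ A₂ :=
      hd.mono Set.inter_subset_right Set.inter_subset_right
    have hA₁l : A₁ ⊆ v₁.leaves := Set.inter_subset_right
    have hA₂l : A₂ ⊆ v₂.leaves := Set.inter_subset_right
    refine ⟨A₁, ⟨(v₁.sf_inter A).2 hs₁, ?_⟩, A₂, ⟨(v₂.sf_inter A).2 hs₂, ?_⟩, hAeq⟩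
    · intro B hB hsfB
      have hBsub : B ⊆ v₁.leaves := hB.1.trans hA₁l
      have hBA₂ : Disjoint B A₂ := hd.mono hBsub hA₂l
      have hlt : B ∪ A₂ ⊂ A := by
        rw [hAeq]
        refine ⟨Set.union_subset_union_left _ hB.1, fun hle => ?_⟩
        obtain ⟨x, hxA₁, hxB⟩ := Set.not_subset.1 hB.2
        rcases hle (Set.mem_union_left _ hxA₁) with h | h
        · exact hxB h
        · exact (hd.mono hA₁l hA₂l).ne_of_mem hxA₁ h rfl
      refine hmin _ hlt (show _ ∧ _ from ⟨?_, ?_⟩)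
      · refine (v₁.sf_congr _ B ?_).2 hsfB
        rw [Set.union_inter_distrib_right, (hd.symm.mono hA₂l le_rfl).inter_eq,
          Set.union_empty, Set.inter_eq_left.2 hBsub]
      · refine (v₂.sf_congr _ A ?_).2 hs₂
        rw [Set.union_inter_distrib_right, (hd.mono hBsub le_rfl).inter_eq,
          Set.empty_union, hA₂]
        rw [Set.inter_assoc, Set.inter_self]
    · intro B hB hsfB
      have hBsub : B ⊆ v₂.leaves := hB.1.trans hA₂l
      have hlt : A₁ ∪ B ⊂ A := by
        rw [hAeq]
        refine ⟨Set.union_subset_union_right _ hB.1, fun hle => ?_⟩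
        obtain ⟨x, hxA₂, hxB⟩ := Set.not_subset.1 hB.2
        rcases hle (Set.mem_union_right _ hxA₂) with h | h
        · exact (hd.mono hA₁l hA₂l).ne_of_mem h hxA₂ rfl
        · exact hxB h
      refine hmin _ hlt (show _ ∧ _ from ⟨?_, ?_⟩)
      · refine (v₁.sf_congr _ A ?_).2 hs₁
        rw [Set.union_inter_distrib_right, (hd.symm.mono hBsub le_rfl).inter_eq,
          Set.union_empty, hA₁]
        rw [Set.inter_assoc, Set.inter_self]
      · refine (v₂.sf_congr _ B ?_).2 hsfB
        rw [Set.union_inter_distrib_right, (hd.mono hA₁l le_rfl).inter_eq,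
          Set.empty_union, Set.inter_eq_left.2 hBsub]
  · rintro ⟨A₁, ⟨hs₁, hm₁⟩, A₂, ⟨hs₂, hm₂⟩, rfl⟩
    have hA₁l : A₁ ⊆ v₁.leaves := SAT.min_subset_leaves ⟨hs₁, hm₁⟩
    have hA₂l : A₂ ⊆ v₂.leaves := SAT.min_subset_leaves ⟨hs₂, hm₂⟩
    have hint₁ : (A₁ ∪ A₂) ∩ v₁.leaves = A₁ := by
      rw [Set.union_inter_distrib_right, Set.inter_eq_left.2 hA₁l,
        (hd.symm.mono hA₂l le_rfl).inter_eq, Set.union_empty]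
    have hint₂ : (A₁ ∪ A₂) ∩ v₂.leaves = A₂ := by
      rw [Set.union_inter_distrib_right, Set.inter_eq_left.2 hA₂l,
        (hd.mono hA₁l le_rfl).inter_eq, Set.empty_union]
    constructor
    · constructor
      · exact (v₁.sf_inter _).1 (by rw [hint₁]; exact hs₁)
      · exact (v₂.sf_inter _).1 (by rw [hint₂]; exact hs₂)
    · rintro B hB ⟨hb₁, hb₂⟩
      have hB₁ : B ∩ v₁.leaves ⊆ A₁ := by
        rw [← hint₁]; exact Set.inter_subset_inter_left _ hB.1
      have hB₂ : B ∩ v₂.leaves ⊆ A₂ := by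
        rw [← hint₂]; exact Set.inter_subset_inter_left _ hB.1
      have he₁ : B ∩ v₁.leaves = A₁ := by
        by_contra hne
        exact hm₁ _ ⟨hB₁, fun h => hne (le_antisymm hB₁ h)⟩ ((v₁.sf_inter B).2 hb₁)
      have he₂ : B ∩ v₂.leaves = A₂ := by
        by_contra hne
        exact hm₂ _ ⟨hB₂, fun h => hne (le_antisymm hB₂ h)⟩ ((v₂.sf_inter B).2 hb₂)
      have : A₁ ∪ A₂ ⊆ B := by
        rw [← he₁, ← he₂]
        exact Set.union_subset Set.inter_subset_left Set.inter_subset_left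
      exact hB.2 this
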